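/- arXiv:2504.14756 — 2 statements merged into one kernel-verified Lean document; each statement's English description precedes it below -/
import Mathlib

section
/- Let X₊, X₋ : ℝ³ → ℝ³ be the vector fields X₊(ρ,p,u) = (ρ, κp, √(κp/ρ)) and X₋(ρ,p,u) = (ρ, κp, −√(κp/ρ)) defined on the region ρ > 0, p > 0. Then their Lie bracket satisfies [X₊, X₋] = ((1−κ)/2)·X₊ + ((κ−1)/2)·X₋. -/
noncomputable section

/-- Lie bracket of vector fields on `ℝ³`: `[X,Y] = (DY)X − (DX)Y`. -/
def bracket (X Y : (Fin 3 → ℝ) → (Fin 3 → ℝ)) : (Fin 3 → ℝ) → (Fin 3 → ℝ) :=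
  fun p => fderiv ℝ Y p (X p) - fderiv ℝ X p (Y p)

/-- The sound-wave eigenvector field `X₊(ρ,p,u) = (ρ, κp, √(κp/ρ))`. -/
def Xplus (κ : ℝ) : (Fin 3 → ℝ) → (Fin 3 → ℝ) :=
  fun v => ![v 0, κ * v 1, Real.sqrt (κ * v 1 / v 0)]

/-- The sound-wave eigenvector field `X₋(ρ,p,u) = (ρ, κp, −√(κp/ρ))`. -/
def Xminus (κ : ℝ) : (Fin 3 → ℝ) → (Fin 3 → ℝ) :=
  fun v => ![v 0, κ * v 1, -Real.sqrt (κ * v 1 / v 0)]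

open ContinuousLinearMap in
lemma hasFDerivAt_sqrtcomp (κ : ℝ) (v : Fin 3 → ℝ) (h0 : 0 < v 0) (h1 : 0 < κ * v 1) :
    HasFDerivAt (fun w : Fin 3 → ℝ => Real.sqrt (κ * w 1 / w 0))
      ((1 / (2 * Real.sqrt (κ * v 1 / v 0))) •
        ((κ * v 1) • ((-((v 0 : ℝ) ^ 2)⁻¹) • (proj 0 : (Fin 3 → ℝ) →L[ℝ] ℝ)) +
          (v 0)⁻¹ • (κ • (proj 1 : (Fin 3 → ℝ) →L[ℝ] ℝ)))) v := by
  have hp0 := hasFDerivAt_apply (𝕜 := ℝ) (0 : Fin 3) v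
  have hp1 := hasFDerivAt_apply (𝕜 := ℝ) (1 : Fin 3) v
  have hinv : HasFDerivAt (fun w : Fin 3 → ℝ => (w 0)⁻¹)
      ((-((v 0 : ℝ) ^ 2)⁻¹) • (proj 0 : (Fin 3 → ℝ) →L[ℝ] ℝ)) v :=
    (hasDerivAt_inv h0.ne').comp_hasFDerivAt v hp0
  have hc : HasFDerivAt (fun w : Fin 3 → ℝ => κ * w 1)
      (κ • (proj 1 : (Fin 3 → ℝ) →L[ℝ] ℝ)) v := hp1.const_mul κ
  have hmul := hc.mul hinv
  have hx : κ * v 1 / v 0 ≠ 0 := by positivity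
  have := hmul.sqrt (by simpa [div_eq_mul_inv] using hx)
  simpa [div_eq_mul_inv] using this

open ContinuousLinearMap in
/-- The derivative of the third component of `X₊`. -/
def D (κ : ℝ) (v : Fin 3 → ℝ) : (Fin 3 → ℝ) →L[ℝ] ℝ :=
  (1 / (2 * Real.sqrt (κ * v 1 / v 0))) •
    ((κ * v 1) • ((-((v 0 : ℝ) ^ 2)⁻¹) • (proj 0 : (Fin 3 → ℝ) →L[ℝ] ℝ)) +
      (v 0)⁻¹ • (κ • (proj 1 : (Fin 3 → ℝ) →L[ℝ] ℝ)))

open ContinuousLinearMap in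
lemma hasFDerivAt_Xplus (κ : ℝ) (v : Fin 3 → ℝ) (h0 : 0 < v 0) (h1 : 0 < κ * v 1) :
    HasFDerivAt (Xplus κ)
      (pi ![(proj 0 : (Fin 3 → ℝ) →L[ℝ] ℝ), κ • proj 1, D κ v]) v := by
  apply hasFDerivAt_pi''
  intro i
  fin_cases i <;> simp only [Xplus, proj_pi, Matrix.cons_val_zero, Matrix.cons_val_one,
    Matrix.head_cons, Matrix.cons_val_two, Matrix.tail_cons, Fin.isValue]
  · exact hasFDerivAt_apply (𝕜 := ℝ) (0 : Fin 3) v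
  · exact (hasFDerivAt_apply (𝕜 := ℝ) (1 : Fin 3) v).const_mul κ
  · exact hasFDerivAt_sqrtcomp κ v h0 h1

open ContinuousLinearMap in
lemma hasFDerivAt_Xminus (κ : ℝ) (v : Fin 3 → ℝ) (h0 : 0 < v 0) (h1 : 0 < κ * v 1) :
    HasFDerivAt (Xminus κ)
      (pi ![(proj 0 : (Fin 3 → ℝ) →L[ℝ] ℝ), κ • proj 1, -D κ v]) v := by
  apply hasFDerivAt_pi''
  intro i
  fin_cases i <;> simp only [Xminus, proj_pi, Matrix.cons_val_zero, Matrix.cons_val_one,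
    Matrix.head_cons, Matrix.cons_val_two, Matrix.tail_cons, Fin.isValue]
  · exact hasFDerivAt_apply (𝕜 := ℝ) (0 : Fin 3) v
  · exact (hasFDerivAt_apply (𝕜 := ℝ) (1 : Fin 3) v).const_mul κ
  · exact (hasFDerivAt_sqrtcomp κ v h0 h1).neg

/-- `[X₊, X₋] = ((1−κ)/2)·X₊ + ((κ−1)/2)·X₋` on the region `ρ > 0`, `p > 0`. -/
theorem euler_sound_waves_bracket (κ : ℝ) (hκ : 0 < κ) :
    ∀ v : Fin 3 → ℝ, 0 < v 0 → 0 < v 1 →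
      bracket (Xplus κ) (Xminus κ) v
        = ((1 - κ) / 2) • Xplus κ v + ((κ - 1) / 2) • Xminus κ v := by
  intro v h0 h1
  have hk1 : 0 < κ * v 1 := by positivity
  have hplus := hasFDerivAt_Xplus κ v h0 hk1
  have hminus := hasFDerivAt_Xminus κ v h0 hk1
  have hs : 0 < Real.sqrt (κ * v 1 / v 0) := Real.sqrt_pos.2 (by positivity)
  set s := Real.sqrt (κ * v 1 / v 0) with hs_def
  have hss : s * s = κ * v 1 / v 0 := Real.mul_self_sqrt (by positivity)
  have hkv : κ * v 1 = s * s * v 0 := by field_simp at hss; linarith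
  rw [bracket, hplus.fderiv, hminus.fderiv]
  funext i
  fin_cases i <;>
    simp [Xplus, Xminus, D, ContinuousLinearMap.pi_apply, ContinuousLinearMap.proj_apply,
      ContinuousLinearMap.smul_apply, ContinuousLinearMap.add_apply,
      ContinuousLinearMap.neg_apply] <;>
    (try rw [hkv]) <;> field_simp <;> (try rw [Real.sqrt_sq hs.le]) <;> ring
end
end

section
/- Let X₁ = (1,0,0) and Xⱼ = (aⱼ, bⱼ, cⱼ) (j ∈ {2,3}) be smooth vector fields on an open subset of ℝ³ with bⱼ, cⱼ nonvanishing, forming a quasi-rectifiable family. Then ∂(ln bⱼ)/∂x = ∂(ln cⱼ)/∂x, and consequently there exists a smooth function c̃ = c̃(y,z), independent of x, with bⱼ = c̃·cⱼ. -/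
noncomputable section

/-- Let `X₁ = (1,0,0)` and `Xⱼ = (aⱼ,bⱼ,cⱼ)` (for `j ∈ {2,3}`, indexed by `Fin 2`)
be smooth vector fields with `bⱼ, cⱼ` nonvanishing, everywhere linearly independent
and quasi-rectifiable.  Then `∂ₓ(ln bⱼ) = ∂ₓ(ln cⱼ)`, and there is a smooth
`c̃ = c̃(y,z)` (independent of `x`) with `bⱼ = c̃·cⱼ`. -/
theorem proportional_components
    (a b c : Fin 2 → (Fin 3 → ℝ) → ℝ)
    (X1 : (Fin 3 → ℝ) → (Fin 3 → ℝ)) (hX1 : X1 = fun _ => ![1, 0, 0])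
    (Xj : Fin 2 → (Fin 3 → ℝ) → (Fin 3 → ℝ))
    (hXj : ∀ j, Xj j = fun v => ![a j v, b j v, c j v])
    (ha : ∀ j, ContDiff ℝ (⊤ : ℕ∞) (a j)) (hb : ∀ j, ContDiff ℝ (⊤ : ℕ∞) (b j))
    (hc : ∀ j, ContDiff ℝ (⊤ : ℕ∞) (c j))
    (hbne : ∀ j v, b j v ≠ 0) (hcne : ∀ j v, c j v ≠ 0)
    (hindep : ∀ v, LinearIndependent ℝ ![X1 v, Xj 0 v, Xj 1 v])
    (hquasi1 : ∀ j, ∃ f g : (Fin 3 → ℝ) → ℝ, ContDiff ℝ (⊤ : ℕ∞) f ∧ ContDiff ℝ (⊤ : ℕ∞) g ∧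
      bracket X1 (Xj j) = fun v => f v • X1 v + g v • Xj j v)
    (hquasi2 : ∃ f g : (Fin 3 → ℝ) → ℝ, ContDiff ℝ (⊤ : ℕ∞) f ∧ ContDiff ℝ (⊤ : ℕ∞) g ∧
      bracket (Xj 0) (Xj 1) = fun v => f v • Xj 0 v + g v • Xj 1 v) :
    ∀ j : Fin 2,
      (∀ v : Fin 3 → ℝ,
        fderiv ℝ (fun q => Real.log (b j q)) v (Pi.single 0 1)
          = fderiv ℝ (fun q => Real.log (c j q)) v (Pi.single 0 1)) ∧
      (∃ ct : (Fin 3 → ℝ) → ℝ, ContDiff ℝ (⊤ : ℕ∞) ct ∧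
        (∀ v : Fin 3 → ℝ, fderiv ℝ ct v (Pi.single 0 1) = 0) ∧
        (∀ v : Fin 3 → ℝ, b j v = ct v * c j v)) := by
  intro j
  obtain ⟨f, g, hf, hg, heq⟩ := hquasi1 j
  have he1' : (![1, 0, 0] : Fin 3 → ℝ) = Pi.single 0 1 := by
    funext i; fin_cases i <;> simp
  have had : ∀ v, DifferentiableAt ℝ (a j) v :=
    fun v => ((ha j).differentiable (by simp)).differentiableAt
  have hbd : ∀ v, DifferentiableAt ℝ (b j) v :=
    fun v => ((hb j).differentiable (by simp)).differentiableAt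
  have hcd : ∀ v, DifferentiableAt ℝ (c j) v :=
    fun v => ((hc j).differentiable (by simp)).differentiableAt
  have hcomp : ∀ v, fderiv ℝ (Xj j) v = ContinuousLinearMap.pi
      fun i => fderiv ℝ (fun w => Xj j w i) v := by
    intro v
    apply fderiv_pi
    intro i
    fin_cases i
    · simpa [hXj] using had v
    · simpa [hXj] using hbd v
    · simpa [hXj] using hcd v
  have hfb : (fun w => Xj j w 1) = b j := by funext w; simp [hXj]
  have hfc : (fun w => Xj j w 2) = c j := by funext w; simp [hXj]
  have key : ∀ (v : Fin 3 → ℝ) (i : Fin 3),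
      fderiv ℝ (fun w => Xj j w i) v (Pi.single 0 1)
        = f v * (Pi.single 0 1 : Fin 3 → ℝ) i + g v * Xj j v i := by
    intro v i
    have h1 := congrFun (congrFun heq v) i
    simp only [bracket, hX1, Pi.sub_apply, Pi.add_apply, Pi.smul_apply,
      smul_eq_mul] at h1
    rw [fderiv_fun_const] at h1
    simp only [Pi.zero_apply, ContinuousLinearMap.zero_apply, sub_zero] at h1
    rw [hcomp v, he1'] at h1
    simpa [ContinuousLinearMap.pi_apply, he1'] using h1
  have hb' : ∀ v, fderiv ℝ (b j) v (Pi.single 0 1) = g v * b j v := by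
    intro v
    have := key v 1
    rw [hfb] at this
    simpa [hXj] using this
  have hc' : ∀ v, fderiv ℝ (c j) v (Pi.single 0 1) = g v * c j v := by
    intro v
    have := key v 2
    rw [hfc] at this
    simpa [hXj] using this
  constructor
  · intro v
    have hBlog : HasFDerivAt (fun q => Real.log (b j q))
        ((b j v)⁻¹ • fderiv ℝ (b j) v) v := ((hbd v).hasFDerivAt).log (hbne j v)
    have hClog : HasFDerivAt (fun q => Real.log (c j q))
        ((c j v)⁻¹ • fderiv ℝ (c j) v) v := ((hcd v).hasFDerivAt).log (hcne j v)
    rw [hBlog.fderiv, hClog.fderiv]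
    simp only [ContinuousLinearMap.smul_apply, smul_eq_mul, hb' v, hc' v]
    field_simp [hbne j v, hcne j v]
  · refine ⟨fun v => b j v / c j v, (hb j).div (hc j) (fun v => hcne j v), ?_, ?_⟩
    · intro v
      have hctd : DifferentiableAt ℝ (fun w => b j w / c j w) v :=
        ((((hb j).div (hc j) (fun v => hcne j v)).differentiable (by simp)).differentiableAt)
      have hbeq : b j = fun w => (b j w / c j w) * c j w := by
        funext w; rw [div_mul_cancel₀ _ (hcne j w)]
      have hmul := fderiv_fun_mul hctd (hcd v)
      have h2 : fderiv ℝ (b j) v (Pi.single 0 1)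
          = (b j v / c j v) * fderiv ℝ (c j) v (Pi.single 0 1)
            + c j v * fderiv ℝ (fun w => b j w / c j w) v (Pi.single 0 1) := by
        conv_lhs => rw [hbeq]
        rw [hmul]
        simp [ContinuousLinearMap.add_apply, ContinuousLinearMap.smul_apply, smul_eq_mul]
      rw [hb' v, hc' v] at h2
      have hbc : b j v / c j v * (g v * c j v) = g v * b j v := by
        field_simp
        rw [div_eq_mul_inv, mul_right_comm (b j v), mul_assoc (b j v * g v), mul_inv_cancel₀ (hcne j v)]
        ring
      rw [hbc] at h2
      have h3 : c j v * fderiv ℝ (fun w => b j w / c j w) v (Pi.single 0 1) = 0 := by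
        linarith
      exact (mul_eq_zero.mp h3).resolve_left (hcne j v)
    · intro v
      exact (div_mul_cancel₀ (b j v) (hcne j v)).symm
end
end
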